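/- arXiv:0908.3298 — 2 statements merged into one kernel-verified Lean document; each statement's English description precedes it below -/
import Mathlib

section
/- Let f(u) be a formal power series over a commutative Q-algebra A with f(0)=0 and f'(0)=1, such that 1/f(u) + 1/f(-u) = c for some constant c ∈ A (as an identity of formal Laurent series). Then there exists a formal power series q(t) with q(0)=1 such that f(u) = u/(q(u²) + c·u/2). -/
/-!
Write `w(u) = u / f(u)`, a power series with `w(0) = 1`. Multiplying
`1/f(u) + 1/f(-u) = c` by `u` gives `w(u) - w(-u) = c·u`, so the odd part of `w` is `c·u/2`
while its even part is some `q(u²)`; hence `u / f(u) = q(u²) + c·u/2`.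
-/

open PowerSeries

/-- Composition (substitution) of formal power series: `psComp1 f g = f(g(u))`.
It is the standard composition whenever `g` has zero constant term. -/
noncomputable def psComp1 {A : Type*} [CommSemiring A] (f g : PowerSeries A) : PowerSeries A :=
  PowerSeries.mk fun n =>
    ∑ k ∈ Finset.range (n + 1), PowerSeries.coeff k f * PowerSeries.coeff n (g ^ k)

theorem psComp1_X_pow {R : Type*} [CommRing R] (p : ℕ) (hp : p ≠ 0) (q : R⟦X⟧) :
    psComp1 q (X ^ p) = expand p hp q := by
  ext n
  simp only [psComp1, coeff_mk, ← pow_mul, coeff_X_pow, mul_ite, mul_one, mul_zero,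
    coeff_expand]
  split_ifs with hdvd
  · obtain ⟨k, rfl⟩ := hdvd
    have hp' := Nat.pos_of_ne_zero hp
    simp_rw [Nat.mul_left_cancel_iff hp']
    have hk : k ∈ Finset.range (p * k + 1) :=
      Finset.mem_range.mpr (Nat.lt_succ_of_le (Nat.le_mul_of_pos_left k hp'))
    rw [Finset.sum_ite_eq, if_pos hk, Nat.mul_div_cancel_left _ hp']
  · exact Finset.sum_eq_zero fun k _ => if_neg fun h => hdvd ⟨k, h⟩

namespace PowerSeries

section CommRing

variable {R : Type*} [CommRing R]

theorem exists_mul_eq_X {f : R⟦X⟧} (h0 : constantCoeff f = 0) (h1 : coeff 1 f = 1) :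
    ∃ w : R⟦X⟧, constantCoeff w = 1 ∧ f * w = X := by
  set v : R⟦X⟧ := mk fun n => coeff (n + 1) f
  have hv : constantCoeff v = ↑(1 : Rˣ) := by simpa [v] using h1
  refine ⟨invOfUnit v 1, by simp, ?_⟩
  rw [eq_X_mul_shift_add_const f, h0, map_zero, add_zero, mul_assoc, mul_invOfUnit v 1 hv,
    mul_one]

theorem sub_rescale_neg_one_eq_C_mul_X {f w : R⟦X⟧} {c : R}
    (hc : rescale (-1) f + f = C c * (f * rescale (-1) f)) (hfw : f * w = X) :
    w - rescale (-1) w = C c * X := by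
  have hfw' : rescale (-1) f * rescale (-1) w = -X := by
    rw [← map_mul, hfw, rescale_neg_one_X]
  have key : X * rescale (-1) w - X * w = C c * (X * -X) := calc
    X * rescale (-1) w - X * w
        = (f * w) * rescale (-1) w + (rescale (-1) f * rescale (-1) w) * w := by
      rw [hfw, hfw']; ring
    _ = (rescale (-1) f + f) * (w * rescale (-1) w) := by ring
    _ = C c * ((f * w) * (rescale (-1) f * rescale (-1) w)) := by rw [hc]; ring
    _ = C c * (X * -X) := by rw [hfw, hfw']
  apply X_mul_cancel
  linear_combination -key

theorem coeff_sub_rescale_neg_one_of_odd (w : R⟦X⟧) {n : ℕ} (hn : Odd n) :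
    coeff n (w - rescale (-1) w) = 2 * coeff n w := by
  rw [map_sub, coeff_rescale, hn.neg_one_pow]
  ring

end CommRing

theorem expand_two_even_add_C_mul_X {A : Type*} [CommRing A] [Algebra ℚ A] {w : A⟦X⟧} {c : A}
    (h : w - rescale (-1) w = C c * X) :
    expand 2 two_ne_zero (mk fun n => coeff (2 * n) w) + C ((1 / 2 : ℚ) • c) * X = w := by
  ext n
  rcases Nat.even_or_odd' n with ⟨k, rfl | rfl⟩
  · have : 2 * k ≠ 1 := by omega
    simp [coeff_X, this]
  · have hodd := coeff_sub_rescale_neg_one_of_odd w (odd_two_mul_add_one k)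
    rw [h] at hodd
    have half : coeff (2 * k + 1) w = (1 / 2 : ℚ) • coeff (2 * k + 1) (C c * X) := by
      rw [hodd, Algebra.smul_def, ← mul_assoc, ← map_ofNat (algebraMap ℚ A) 2, ← map_mul]
      norm_num
    rw [half, map_add, coeff_expand_of_not_dvd _ _ _ (by omega), zero_add]
    rcases eq_or_ne k 0 with rfl | hk
    · simp
    · simp [coeff_C, hk]

end PowerSeries

/-- If `f(0) = 0`, `f'(0) = 1` and `1/f(u) + 1/f(-u) = c` (equivalently, in cleared form,
`f(-u) + f(u) = c·f(u)·f(-u)`), then there is a power series `q` with `q(0) = 1` such that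
`f(u) = u/(q(u²) + c·u/2)`, i.e. `f(u)·(q(u²) + (c/2)·u) = u`. -/
theorem stmt_1 {A : Type*} [CommRing A] [Algebra ℚ A] (f : PowerSeries A) (c : A)
    (h0 : PowerSeries.constantCoeff f = 0) (h1 : PowerSeries.coeff 1 f = 1)
    (hc : PowerSeries.rescale (-1) f + f
        = PowerSeries.C c * (f * PowerSeries.rescale (-1) f)) :
    ∃ q : PowerSeries A, PowerSeries.constantCoeff q = 1 ∧
      f * (psComp1 q (PowerSeries.X ^ 2)
            + PowerSeries.C ((1 / 2 : ℚ) • c) * PowerSeries.X) = PowerSeries.X := by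
  obtain ⟨w, hw0, hfw⟩ := exists_mul_eq_X h0 h1
  refine ⟨mk fun n => coeff (2 * n) w, by simpa using hw0, ?_⟩
  rw [psComp1_X_pow 2 two_ne_zero,
    expand_two_even_add_C_mul_X (sub_rescale_neg_one_eq_C_mul_X hc hfw), hfw]
end

section
/- Let f be a formal power series over a commutative Q-algebra A with f(0)=0, f'(0)=1, satisfying both functional equations: (i) 1/(f(u₁)f(u₂)) - 1/(f(u₁)f(u₁+u₂)) + 1/(f(-u₂)f(u₁+u₂)) = c, and (ii) the same equation with u₁ and u₂ interchanged, for some constant c. Then 1/f(u) + 1/f(-u) is a constant c' ∈ A. -/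
/-!
Write `f̄(u) = f(-u)`. Multiplying (i) by `f̄(u₁)` and (ii) by `f̄(u₂)` and subtracting
eliminates both `c` and `f(u₁ + u₂)`, leaving the separated identity
`P(u₁) G(u₂) = G(u₁) P(u₂)` for `P = f f̄` and `G = f + f̄`. Since `P = -u² + O(u³)`,
comparing the coefficients of `u₁² u₂ⁿ` gives `G = -[u²]G · P`, the cleared form of
`1/f(u) + 1/f(-u) = c'`.
-/

open MvPowerSeries

/-- Substitution of a multivariate power series `g` (with zero constant term) into a
one-variable power series `f`: `psCompMv f g = f(g)`. -/
noncomputable def psCompMv {A : Type*} [CommSemiring A] {σ : Type*}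
    (f : PowerSeries A) (g : MvPowerSeries σ A) : MvPowerSeries σ A :=
  fun m => ∑ k ∈ Finset.range (Finsupp.sum m (fun _ e => e) + 1),
    PowerSeries.coeff k f * MvPowerSeries.coeff m (g ^ k)

section

variable {A σ : Type*} [CommRing A]

theorem psCompMv_eq_subst (f : PowerSeries A) {g : MvPowerSeries σ A}
    (hg : constantCoeff g = 0) : psCompMv f g = PowerSeries.subst g f := by
  ext m
  have hsupp : (Function.support fun k => PowerSeries.coeff k f • coeff m (g ^ k))
      ⊆ Finset.range (m.degree + 1) := fun k hk => by
    rw [Finset.coe_range, Set.mem_Iio, Nat.lt_succ_iff]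
    by_contra! hlt
    refine hk ?_
    beta_reduce
    rw [coeff_of_lt_order ((Nat.cast_lt.mpr hlt).trans_le
      (le_order_pow_of_constantCoeff_eq_zero k hg)), smul_zero]
  rw [PowerSeries.coeff_subst (.of_constantCoeff_zero hg),
    finsum_eq_sum_of_support_subset _ hsupp]
  rfl

theorem psCompMv_X (f : PowerSeries A) (i : σ) :
    psCompMv f (X i) = PowerSeries.subst (X i) f :=
  psCompMv_eq_subst f (constantCoeff_X i)

theorem psCompMv_neg_X (f : PowerSeries A) (i : σ) :
    psCompMv f (-X i) = PowerSeries.subst (X i) (PowerSeries.rescale (-1) f) := by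
  have hX : PowerSeries.HasSubst (X i : MvPowerSeries σ A) := .X i
  rw [psCompMv_eq_subst f (by simp), PowerSeries.rescale_eq_subst,
    PowerSeries.subst_comp_subst_apply (.smul_X' _) hX, PowerSeries.subst_smul hX,
    PowerSeries.subst_X hX, neg_one_smul]

theorem coeff_single_add_single_subst_X_mul_subst_X [DecidableEq σ] {i j : σ} (hij : i ≠ j)
    (p q : PowerSeries A) (a b : ℕ) :
    coeff (Finsupp.single i a + Finsupp.single j b)
        (PowerSeries.subst (X i) p * PowerSeries.subst (X j) q)
      = PowerSeries.coeff a p * PowerSeries.coeff b q := by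
  rw [coeff_mul, Finset.sum_eq_single (Finsupp.single i a, Finsupp.single j b)]
  · simp [PowerSeries.coeff_subst_single]
  · rintro ⟨x, y⟩ hxy hne
    rw [Finset.HasAntidiagonal.mem_antidiagonal] at hxy
    simp only [PowerSeries.coeff_subst_single]
    split_ifs with hx hy
    · have hxi := DFunLike.congr_fun hxy i
      have hyj := DFunLike.congr_fun hxy j
      rw [hy] at hxi
      rw [hx] at hyj
      simp only [Finsupp.coe_add, Pi.add_apply, Finsupp.single_apply, hij, hij.symm,
        if_true, if_false, add_zero, zero_add] at hxi hyj
      exact absurd (by rw [hx, hy, hxi, hyj]) hne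
    all_goals simp
  · simp

theorem coeff_mul_coeff_comm_of_subst_X_mul_subst_X_comm {i j : σ} (hij : i ≠ j)
    {p q : PowerSeries A}
    (h : PowerSeries.subst (X i : MvPowerSeries σ A) p * PowerSeries.subst (X j) q
      = PowerSeries.subst (X i) q * PowerSeries.subst (X j) p) (a b : ℕ) :
    PowerSeries.coeff a p * PowerSeries.coeff b q
      = PowerSeries.coeff a q * PowerSeries.coeff b p := by
  classical
  simpa only [coeff_single_add_single_subst_X_mul_subst_X hij] using
    congrArg (coeff (R := A) (Finsupp.single i a + Finsupp.single j b)) h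

theorem coeff_two_mul_rescale_neg_one {f : PowerSeries A}
    (hf : PowerSeries.constantCoeff f = 0) :
    PowerSeries.coeff 2 (f * PowerSeries.rescale (-1) f) = -PowerSeries.coeff 1 f ^ 2 := by
  rw [PowerSeries.coeff_mul, Finset.Nat.sum_antidiagonal_eq_sum_range_succ_mk]
  simp [Finset.sum_range_succ, PowerSeries.coeff_rescale, hf]
  ring

end

theorem stmt_3_general {A : Type*} [CommRing A] (f : PowerSeries A) (c : A)
    (h0 : PowerSeries.constantCoeff f = 0) (h1 : PowerSeries.coeff 1 f = 1)
    (hi : psCompMv f (X 0 + X 1) * psCompMv f (-X 1)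
          - psCompMv f (X 1) * psCompMv f (-X 1)
          + psCompMv f (X 0) * psCompMv f (X 1)
        = MvPowerSeries.C (σ := Fin 2) c *
            (psCompMv f (X 0) * psCompMv f (X 1) * psCompMv f (X 0 + X 1) * psCompMv f (-X 1)))
    (hii : psCompMv f (X 0 + X 1) * psCompMv f (-X 0)
          - psCompMv f (X 0) * psCompMv f (-X 0)
          + psCompMv f (X 1) * psCompMv f (X 0)
        = MvPowerSeries.C (σ := Fin 2) c *
            (psCompMv f (X 0) * psCompMv f (X 1) * psCompMv f (X 0 + X 1) * psCompMv f (-X 0))) :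
    ∃ c' : A, PowerSeries.rescale (-1) f + f
        = PowerSeries.C c' * (f * PowerSeries.rescale (-1) f) := by
  set fbar := PowerSeries.rescale (-1) f
  simp only [psCompMv_X, psCompMv_neg_X] at hi hii
  have hsep : PowerSeries.subst (X 0 : MvPowerSeries (Fin 2) A) (f * fbar) * PowerSeries.subst (X 1) (fbar + f)
      = PowerSeries.subst (X 0) (fbar + f) * PowerSeries.subst (X 1) (f * fbar) := by
    have hX (i : Fin 2) : PowerSeries.HasSubst (X i : MvPowerSeries (Fin 2) A) := .X i
    simp only [PowerSeries.subst_mul (hX _), PowerSeries.subst_add (hX _)]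
    linear_combination PowerSeries.subst (X 0) fbar * hi - PowerSeries.subst (X 1) fbar * hii
  refine ⟨-PowerSeries.coeff 2 (fbar + f), PowerSeries.ext fun n => ?_⟩
  have hcoeff := coeff_mul_coeff_comm_of_subst_X_mul_subst_X_comm (by decide) hsep 2 n
  rw [coeff_two_mul_rescale_neg_one h0, h1] at hcoeff
  rw [PowerSeries.coeff_C_mul]
  linear_combination -hcoeff

/-- Rigidity on the two stably complex structures `ℂP²_{(1,-1)}` and `ℂP²_{(-1,1)}`:
if `f(0)=0`, `f'(0)=1` and, for some constant `c`,
`1/(f(u₁)f(u₂)) - 1/(f(u₁)f(u₁+u₂)) + 1/(f(-u₂)f(u₁+u₂)) = c` together with the same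
equation with `u₁` and `u₂` interchanged (both stated in cleared form), then
`1/f(u) + 1/f(-u)` is a constant `c'` (again in cleared form). -/
theorem stmt_3 {A : Type*} [CommRing A] [Algebra ℚ A] (f : PowerSeries A) (c : A)
    (h0 : PowerSeries.constantCoeff f = 0) (h1 : PowerSeries.coeff 1 f = 1)
    (hi : psCompMv f (X 0 + X 1) * psCompMv f (-X 1)
          - psCompMv f (X 1) * psCompMv f (-X 1)
          + psCompMv f (X 0) * psCompMv f (X 1)
        = MvPowerSeries.C (σ := Fin 2) c *
            (psCompMv f (X 0) * psCompMv f (X 1) * psCompMv f (X 0 + X 1) * psCompMv f (-X 1)))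
    (hii : psCompMv f (X 0 + X 1) * psCompMv f (-X 0)
          - psCompMv f (X 0) * psCompMv f (-X 0)
          + psCompMv f (X 1) * psCompMv f (X 0)
        = MvPowerSeries.C (σ := Fin 2) c *
            (psCompMv f (X 0) * psCompMv f (X 1) * psCompMv f (X 0 + X 1) * psCompMv f (-X 0))) :
    ∃ c' : A, PowerSeries.rescale (-1) f + f
        = PowerSeries.C c' * (f * PowerSeries.rescale (-1) f) :=
  stmt_3_general f c h0 h1 hi hii
end
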